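/- arXiv:1910.00536 — 2 statements merged into one kernel-verified Lean document; each statement's English description precedes it below -/
import Mathlib

section
/- Let A[0..2h] be 2h+1 i.i.d. uniform random variables on {0,1,...,s-1}. For any fixed index k, the probability that A[k] ≤ A[j] for all j ≠ k equals (1/s) · Σ_{j=1}^{s} (j/s)^{2h}. -/
/-!
Conditioning on the value `v` of `A k`, the other `2h` entries range independently over
`{v, …, s-1}`, which gives `(s - v) ^ (2h)` arrays; summing over `v` and substituting
`j = s - v` yields `∑_{j=1}^{s} j ^ (2h)` favourable arrays among `s ^ (2h+1)`.
-/

open Finset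

section

variable {ι α : Type*} [Fintype ι] [DecidableEq ι] [Fintype α] [DecidableEq α] [Preorder α]
  [LocallyFiniteOrderTop α] (k : ι) [DecidablePred fun f : ι → α => ∀ j, j ≠ k → f k ≤ f j]

theorem filter_forall_apply_le_filter_apply_eq (v : α) :
    ({f : ι → α | ∀ j, j ≠ k → f k ≤ f j} : Finset (ι → α)).filter (fun f => f k = v)
      = Fintype.piFinset (Function.update (fun _ => Ici v) k {v}) := by
  ext f
  simp only [mem_filter, mem_univ, true_and, Fintype.mem_piFinset]
  constructor
  · rintro ⟨hmin, rfl⟩ j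
    rcases eq_or_ne j k with rfl | hj
    · simp
    · simpa [hj] using hmin j hj
  · intro hf
    have hk : f k = v := by simpa using hf k
    exact ⟨fun j hj => by simpa [hj, hk] using hf j, hk⟩

theorem card_filter_forall_apply_le :
    #({f : ι → α | ∀ j, j ≠ k → f k ≤ f j} : Finset (ι → α))
      = ∑ v : α, #(Ici v) ^ (Fintype.card ι - 1) := by
  rw [card_eq_sum_card_fiberwise (f := fun f => f k) (t := univ) fun _ _ => mem_univ _]
  refine sum_congr rfl fun v _ => ?_
  rw [filter_forall_apply_le_filter_apply_eq, Fintype.card_piFinset]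
  simp only [Function.apply_update (fun _ => card)]
  rw [prod_update_of_mem (mem_univ k)]
  simp [prod_const, card_sdiff]

end

theorem sum_fin_pow_sub_eq_sum_Icc (s n : ℕ) :
    ∑ v : Fin s, (s - (v : ℕ)) ^ n = ∑ j ∈ Icc 1 s, j ^ n := by
  rw [Fin.sum_univ_eq_sum_range (fun i => (s - i) ^ n) s]
  refine sum_nbij' (fun a => s - a) (fun b => s - b) ?_ ?_ ?_ ?_ ?_ <;>
    intro a ha <;> simp only [mem_range, mem_Icc] at ha ⊢ <;> omega

theorem nonstrict_min_prob_general (s h : ℕ) (k : Fin (2 * h + 1)) :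
    ((Finset.univ.filter
        (fun A : Fin (2 * h + 1) → Fin s => ∀ j, j ≠ k → A k ≤ A j)).card : ℝ)
      / ((s : ℝ) ^ (2 * h + 1))
    = (1 / (s : ℝ)) * ∑ j ∈ Finset.Icc 1 s, ((j : ℝ) / s) ^ (2 * h) := by
  have hcount : #{A : Fin (2 * h + 1) → Fin s | ∀ j, j ≠ k → A k ≤ A j}
      = ∑ j ∈ Icc 1 s, j ^ (2 * h) := by
    rw [card_filter_forall_apply_le]
    simp only [Fin.card_Ici, Fintype.card_fin, Nat.add_sub_cancel, sum_fin_pow_sub_eq_sum_Icc]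
  rw [hcount]
  push_cast
  simp only [div_pow, ← sum_div, pow_succ, div_div, one_div_mul_eq_div]

/-- For `2h+1` i.i.d. uniform values on `{0,...,s-1}` (modeled by the uniform
counting probability on functions `Fin (2h+1) → Fin s`), the probability that a
fixed index `k` is a non-strict minimum equals `(1/s) · Σ_{j=1}^{s} (j/s)^{2h}`. -/
theorem nonstrict_min_prob (s h : ℕ) (hs : 0 < s) (hh : 0 < h) (k : Fin (2 * h + 1)) :
    ((Finset.univ.filter
        (fun A : Fin (2 * h + 1) → Fin s => ∀ j, j ≠ k → A k ≤ A j)).card : ℝ)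
      / ((s : ℝ) ^ (2 * h + 1))
    = (1 / (s : ℝ)) * ∑ j ∈ Finset.Icc 1 s, ((j : ℝ) / s) ^ (2 * h) :=
  nonstrict_min_prob_general s h k
end

section
/- If a string σ of length N is partitioned into consecutive substrings σ_1,...,σ_m and each σ_i is represented by a node, then the multiset of 2-shingles (pairs of adjacent partition hashes, with a sentinel 0 before σ_1) together with the starting hash determines the sequence (H(σ_1),...,H(σ_m)) uniquely whenever all hash values H(σ_i) are pairwise distinct. -/
/-! The second components of the shingles are the values of the sequence, so `b` is duplicate-free
as well. In a duplicate-free sequence a value occurs at exactly one position, hence the shingles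
starting with `a k` are the sentinel shingle `(0, a 0)` (if `a k = 0`) and `(a k, a (k + 1))`;
since `b (k + 1) ≠ b 0 = a 0`, the sequence is rebuilt one step at a time from its first value. -/

/-- The multiset of 2-shingles of a hash sequence `a : Fin m → ℕ`, where a
sentinel `0` precedes the first value: the shingle at index `i` is
`(a (i-1), a i)`, with first component `0` at `i = 0`. -/
def shingles {m : ℕ} (a : Fin m → ℕ) : Multiset (ℕ × ℕ) :=
  (Finset.univ : Finset (Fin m)).val.map
    (fun i =>
      ((if i.val = 0 then 0
        else a ⟨i.val - 1, Nat.lt_of_le_of_lt (Nat.sub_le _ _) i.isLt⟩), a i))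

open Function

theorem shingles_map_snd {m : ℕ} (a : Fin m → ℕ) :
    (shingles a).map Prod.snd = Finset.univ.val.map a := by
  simp only [shingles, Multiset.map_map, comp_def]

theorem injective_of_shingles_eq {m : ℕ} {a b : Fin m → ℕ} (ha : Injective a)
    (hab : shingles a = shingles b) : Injective b := by
  rw [← Fintype.nodup_map_univ_iff_injective, ← shingles_map_snd, ← hab, shingles_map_snd]
  exact Fintype.nodup_map_univ_iff_injective.mpr ha

theorem shingles_succ {n : ℕ} (a : Fin (n + 1) → ℕ) :
    shingles a = (0, a 0) ::ₘ Finset.univ.val.map (fun k : Fin n => (a k.castSucc, a k.succ)) := by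
  rw [shingles, Fin.univ_succ, Finset.cons_val, Multiset.map_cons, Finset.map_val,
    Multiset.map_map]
  refine congrArg _ (Multiset.map_congr rfl fun k _ => ?_)
  simp [Fin.castSucc, Fin.castAdd, Fin.castLE]

theorem castSucc_succ_mem_shingles {n : ℕ} (a : Fin (n + 1) → ℕ) (k : Fin n) :
    (a k.castSucc, a k.succ) ∈ shingles a := by
  rw [shingles_succ]
  exact Multiset.mem_cons_of_mem (Multiset.mem_map_of_mem _ (Finset.mem_univ_val k))

theorem eq_succ_of_mem_shingles {n : ℕ} {a : Fin (n + 1) → ℕ} (ha : Injective a) {k : Fin n}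
    {y : ℕ} (hy : (a k.castSucc, y) ∈ shingles a) (hy0 : y ≠ a 0) : y = a k.succ := by
  rw [shingles_succ, Multiset.mem_cons, Multiset.mem_map] at hy
  obtain hstart | ⟨j, -, hj⟩ := hy
  · exact absurd (congrArg Prod.snd hstart) hy0
  · obtain ⟨hjk, rfl⟩ := Prod.mk.inj hj
    rw [(ha.comp (Fin.castSucc_injective n)) hjk]

theorem shingles_determine_sequence_general {m : ℕ} (hm : 0 < m) (a b : Fin m → ℕ)
    (ha : Function.Injective a)
    (hsh : shingles a = shingles b)
    (h0 : a ⟨0, hm⟩ = b ⟨0, hm⟩) :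
    a = b := by
  obtain ⟨n, rfl⟩ := Nat.exists_eq_add_one_of_ne_zero hm.ne'
  have hb : Injective b := injective_of_shingles_eq ha hsh
  funext i
  induction i using Fin.induction with
  | zero => exact h0
  | succ k ih =>
    have hmem : (a k.castSucc, b k.succ) ∈ shingles a := by
      rw [ih, hsh]
      exact castSucc_succ_mem_shingles b k
    have hne : b k.succ ≠ a 0 := h0 ▸ hb.ne (Fin.succ_ne_zero k)
    exact (eq_succ_of_mem_shingles ha hmem hne).symm

/-- If all hash values in each sequence are pairwise distinct, the multiset of
2-shingles together with the starting hash determines the hash sequence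
uniquely. -/
theorem shingles_determine_sequence {m : ℕ} (hm : 0 < m) (a b : Fin m → ℕ)
    (ha : Function.Injective a) (hb : Function.Injective b)
    (hsh : shingles a = shingles b)
    (h0 : a ⟨0, hm⟩ = b ⟨0, hm⟩) :
    a = b :=
  shingles_determine_sequence_general hm a b ha hsh h0
end
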